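/- arXiv:1501.00816 — 4 statements merged into one kernel-verified Lean document; each statement's English description precedes it below -/
import Mathlib

section
/- Let N > 2, α ≥ 2, β > α − 2, and let λ₀ < 0. Suppose ψ : ℝ^N → ℝ is a strictly positive, bounded, radial C² function with ψ(x) → 0 as |x| → ∞ which satisfies (1+|x|^α)Δψ(x) − |x|^β ψ(x) = λ₀ ψ(x) for all x ∈ ℝ^N. Then there exists a constant C₁ > 0 such that ψ(x) ≥ C₁ |x|^{−(N−1)/2 − (β−α)/4} exp(−(2/(β−α+2)) |x|^{(β−α+2)/2}) for all x ∈ ℝ^N with |x| ≥ 1. -/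
open MeasureTheory Filter Real

/-- The Laplacian of a function on `ℝ^N`. -/
noncomputable def laplacian {N : ℕ} (f : EuclideanSpace ℝ (Fin N) → ℝ)
    (x : EuclideanSpace ℝ (Fin N)) : ℝ :=
  ∑ i : Fin N, iteratedFDeriv ℝ 2 f x ![EuclideanSpace.single i 1, EuclideanSpace.single i 1]

/-!
Comparison with a barrier. Write `t = ‖x‖²`, `w_B(t) = t^(-B) exp(-σ t^m)` with
`σ = 2/(β-α+2)`, `m = (β-α+2)/4`, and choose `A` with `4A = N + 2m - 2`, so that `w_A(‖x‖²) = Φ(x)`.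
The barrier `V = w_A + w_(A+m/2)` is a subsolution, `(λ₀ + ‖x‖^β) V ≤ (1 + ‖x‖^α) ΔV`, far out:
the choice of `A` cancels the `t^(m-A-1)` term of `Δ w_A`, the correction `w_(A+m/2)` contributes
a positive term of order `t^(m/2-A-1)` that dominates what is left, and `‖x‖^β w_B` is matched by
the leading term of `‖x‖^α Δ w_B`. Then `cV - ψ` has no positive maximum on `{R < ‖x‖}`, where its
Laplacian would be positive; as it tends to `0` at infinity and is `≤ 0` on `‖x‖ = R` for small
`c`, we get `ψ ≥ cV ≥ cΦ` there. On the compact annulus `1 ≤ ‖x‖ ≤ R`, `ψ` is bounded below.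
-/

open Topology InnerProductSpace
open scoped Laplacian

theorem IsLocalMax.deriv_deriv_nonpos {f : ℝ → ℝ} {a : ℝ} (h : IsLocalMax f a)
    (hc : ContinuousAt f a) : deriv (deriv f) a ≤ 0 := by
  by_contra! hpos
  have hconst : f =ᶠ[𝓝 a] fun _ => f a :=
    (h.and (isLocalMin_of_deriv_deriv_pos hpos h.deriv_eq_zero hc)).mono
      fun x hx => le_antisymm hx.1 hx.2
  have : deriv f =ᶠ[𝓝 a] fun _ => 0 := by
    simpa using hconst.deriv
  simp [this.deriv_eq] at hpos

theorem deriv_deriv_comp {h q : ℝ → ℝ} {a : ℝ} (hh : ContDiffAt ℝ 2 h (q a))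
    (hq : ContDiffAt ℝ 2 q a) :
    deriv (deriv fun s => h (q s)) a =
      deriv (deriv h) (q a) * deriv q a ^ 2 + deriv h (q a) * deriv (deriv q) a := by
  have hh' : ∀ᶠ s in 𝓝 a, DifferentiableAt ℝ h (q s) :=
    hq.continuousAt.preimage_mem_nhds ((hh.eventually (by simp)).mono
      fun y hy => hy.differentiableAt (by simp))
  have hq' : ∀ᶠ s in 𝓝 a, DifferentiableAt ℝ q s :=
    (hq.eventually (by simp)).mono fun y hy => hy.differentiableAt (by simp)
  have hderiv : deriv (fun s => h (q s)) =ᶠ[𝓝 a] fun s => deriv h (q s) * deriv q s :=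
    (hh'.and hq').mono fun s hs => deriv_comp s hs.1 hs.2
  have hd2h : DifferentiableAt ℝ (deriv h) (q a) :=
    (hh.derivWithin (m := 1) (by norm_num)).differentiableAt (by simp)
  have hd2q : DifferentiableAt ℝ (deriv q) a :=
    (hq.derivWithin (m := 1) (by norm_num)).differentiableAt (by simp)
  have hprod := (hd2h.hasDerivAt.comp a (hq.differentiableAt (by simp)).hasDerivAt).mul
    hd2q.hasDerivAt
  rw [hderiv.deriv_eq, show (fun s => deriv h (q s) * deriv q s) = deriv h ∘ q * deriv q from rfl,
    hprod.deriv, Function.comp_apply]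
  ring

theorem ContDiffAt.deriv_deriv_comp_add_smul {E : Type*} [NormedAddCommGroup E] [NormedSpace ℝ E]
    {f : E → ℝ} {x : E} (hf : ContDiffAt ℝ 2 f x) (v : E) :
    deriv (deriv fun s : ℝ => f (x + s • v)) 0 = iteratedFDeriv ℝ 2 f x ![v, v] := by
  have hline : Continuous fun s : ℝ => x + s • v := by fun_prop
  have hdiff : ∀ᶠ s in 𝓝 (0 : ℝ), DifferentiableAt ℝ f (x + s • v) := by
    refine (hline.tendsto 0).eventually ?_
    simpa using (hf.eventually (by simp)).mono fun y hy => hy.differentiableAt (by simp)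
  have hderiv : deriv (fun s : ℝ => f (x + s • v)) =ᶠ[𝓝 0]
      fun s => iteratedFDeriv ℝ 1 f (x + s • v) (fun _ => v) :=
    hdiff.mono fun s hs => by simp [hs.deriv_comp_add_smul]
  have hvv : ![v, v] = fun _ => v := by ext i; fin_cases i <;> rfl
  have hf' : ContDiffAt ℝ ((1 : ℕ) + 1) f (x + (0 : ℝ) • v) := by
    rw [zero_smul, add_zero]; exact hf
  rw [hderiv.deriv_eq, hvv]
  simpa using hf'.deriv_fderiv_add_smul

section InnerProductSpace

variable {E : Type*} [NormedAddCommGroup E] [InnerProductSpace ℝ E] [FiniteDimensional ℝ E]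

theorem IsLocalMax.laplacian_nonpos {f : E → ℝ} {x : E} (h : IsLocalMax f x)
    (hf : ContDiffAt ℝ 2 f x) : Δ f x ≤ 0 := by
  rw [laplacian_eq_iteratedFDeriv_stdOrthonormalBasis]
  refine Finset.sum_nonpos fun i _ => ?_
  rw [← hf.deriv_deriv_comp_add_smul]
  have hline : Continuous fun s : ℝ => x + s • stdOrthonormalBasis ℝ E i := by fun_prop
  refine IsLocalMax.deriv_deriv_nonpos ?_
    (hf.continuousAt.comp_of_eq hline.continuousAt (by simp))
  exact IsLocalMax.comp_continuous (g := fun s : ℝ => x + s • stdOrthonormalBasis ℝ E i)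
    (by simpa using h) hline.continuousAt

/-- The Laplacian of `x ↦ h (‖x‖ ^ 2)` in dimension `n`, written in the variable `t = ‖x‖ ^ 2`. -/
noncomputable def radialLaplacian (n : ℝ) (h : ℝ → ℝ) (t : ℝ) : ℝ :=
  4 * t * deriv (deriv h) t + 2 * n * deriv h t

theorem laplacian_comp_norm_sq {h : ℝ → ℝ} {x : E} (hh : ContDiffAt ℝ 2 h (‖x‖ ^ 2)) :
    Δ (fun y : E => h (‖y‖ ^ 2)) x = radialLaplacian (Module.finrank ℝ E) h (‖x‖ ^ 2) := by
  have hf : ContDiffAt ℝ 2 (fun y : E => h (‖y‖ ^ 2)) x :=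
    hh.comp x (contDiff_norm_sq ℝ).contDiffAt
  rw [laplacian_eq_iteratedFDeriv_stdOrthonormalBasis]
  have hterm : ∀ i, iteratedFDeriv ℝ 2 (fun y : E => h (‖y‖ ^ 2)) x
      ![stdOrthonormalBasis ℝ E i, stdOrthonormalBasis ℝ E i] =
      4 * deriv (deriv h) (‖x‖ ^ 2) * inner ℝ x (stdOrthonormalBasis ℝ E i) ^ 2
        + 2 * deriv h (‖x‖ ^ 2) := by
    intro i
    set b := stdOrthonormalBasis ℝ E i
    have hq : (fun s : ℝ => ‖x + s • b‖ ^ 2) = fun s => ‖x‖ ^ 2 + 2 * inner ℝ x b * s + s ^ 2 := by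
      ext s
      rw [norm_add_sq_real, real_inner_smul_right, norm_smul,
        (stdOrthonormalBasis ℝ E).orthonormal.1 i]
      simp; ring
    rw [← hf.deriv_deriv_comp_add_smul, show (fun s : ℝ => h (‖x + s • b‖ ^ 2)) =
      fun s => h ((fun s : ℝ => ‖x‖ ^ 2 + 2 * inner ℝ x b * s + s ^ 2) s) by rw [← hq],
      deriv_deriv_comp (by simpa using hh) (by fun_prop)]
    have hd : ∀ s, HasDerivAt (fun s : ℝ => ‖x‖ ^ 2 + 2 * inner ℝ x b * s + s ^ 2)
        (2 * inner ℝ x b + 2 * s) s := fun s => by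
      simpa using ((hasDerivAt_id s).const_mul (2 * inner ℝ x b)).const_add (‖x‖ ^ 2)
        |>.fun_add (hasDerivAt_pow 2 s)
    have hd2 : HasDerivAt (fun s : ℝ => 2 * inner ℝ x b + 2 * s) 2 0 := by
      simpa using ((hasDerivAt_id (0 : ℝ)).const_mul 2).const_add (2 * inner ℝ x b)
    rw [funext fun s => (hd s).deriv, hd2.deriv]
    norm_num
    ring
  simp only [hterm, Finset.sum_add_distrib, ← Finset.mul_sum,
    (stdOrthonormalBasis ℝ E).sum_sq_inner_left]
  simp [radialLaplacian]
  ring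

theorem nonpos_of_laplacian_pos {F U : Set E} {u : E → ℝ} (hF : IsClosed F) (hU : IsOpen U)
    (hUF : U ⊆ F) (hu : ContinuousOn u F) (hu₂ : ∀ x ∈ U, ContDiffAt ℝ 2 u x)
    (hlim : Tendsto u (cocompact E) (𝓝 0)) (hbdry : ∀ x ∈ F \ U, u x ≤ 0)
    (hΔ : ∀ x ∈ U, 0 < u x → 0 < Δ u x) : ∀ x ∈ F, u x ≤ 0 := by
  by_contra! ⟨z, hzF, hz⟩
  obtain ⟨x₀, hx₀F, hmax⟩ := hu.exists_isMaxOn' hF hzF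
    (((hlim.eventually (gt_mem_nhds hz)).filter_mono inf_le_left).mono fun _ h => h.le)
  have hx₀ : 0 < u x₀ := hz.trans_le (hmax hzF)
  have hx₀U : x₀ ∈ U := by_contra fun h => (hbdry x₀ ⟨hx₀F, h⟩).not_gt hx₀
  have hloc : IsLocalMax u x₀ := hmax.isLocalMax (mem_of_superset (hU.mem_nhds hx₀U) hUF)
  exact (hloc.laplacian_nonpos (hu₂ x₀ hx₀U)).not_gt (hΔ x₀ hx₀U hx₀)

theorem le_of_subsolution_of_solution {v ψ a b : E → ℝ} {R c : ℝ} (hc : 0 ≤ c)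
    (hv : ∀ x, R ≤ ‖x‖ → ContDiffAt ℝ 2 v x) (hψ : ContDiff ℝ 2 ψ)
    (hvlim : Tendsto v (cocompact E) (𝓝 0)) (hψlim : Tendsto ψ (cocompact E) (𝓝 0))
    (ha : ∀ x, R < ‖x‖ → 0 < a x) (hb : ∀ x, R < ‖x‖ → 0 < b x)
    (hsub : ∀ x, R < ‖x‖ → b x * v x ≤ a x * Δ v x)
    (hsol : ∀ x, R < ‖x‖ → a x * Δ ψ x = b x * ψ x)
    (hbdry : ∀ x, ‖x‖ = R → c * v x ≤ ψ x) : ∀ x, R ≤ ‖x‖ → c * v x ≤ ψ x := by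
  have hcv : ∀ x, R ≤ ‖x‖ → ContDiffAt ℝ 2 (c • v) x := fun x hx => (hv x hx).const_smul c
  have hu₂ : ∀ x, R ≤ ‖x‖ → ContDiffAt ℝ 2 (c • v - ψ) x :=
    fun x hx => (hcv x hx).sub hψ.contDiffAt
  have hlim : Tendsto (c • v - ψ) (cocompact E) (𝓝 0) := by
    have h := (hvlim.const_smul c).sub hψlim
    rwa [smul_zero, sub_zero] at h
  have key := nonpos_of_laplacian_pos (F := {x | R ≤ ‖x‖}) (U := {x | R < ‖x‖})
    (isClosed_le continuous_const continuous_norm) (isOpen_lt continuous_const continuous_norm)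
    (fun _ hx => le_of_lt (a := R) hx) (fun x hx => (hu₂ x hx).continuousAt.continuousWithinAt)
    (fun x hx => hu₂ x (le_of_lt hx)) hlim
    (fun x hx => by simpa using hbdry x (le_antisymm (not_lt.1 hx.2) hx.1)) (fun x hx hpos => ?_)
  · exact fun x hx => by simpa using key x hx
  have hΔ : Δ (c • v - ψ) x = c * Δ v x - Δ ψ x := by
    rw [(hcv x (le_of_lt hx)).laplacian_sub hψ.contDiffAt,
      laplacian_smul c (hv x (le_of_lt hx)), smul_eq_mul]
  have hpos' : 0 < b x * (c * v x - ψ x) := mul_pos (hb x hx) (by simpa using hpos)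
  have hcsub := mul_le_mul_of_nonneg_left (hsub x hx) hc
  rw [hΔ]
  refine pos_of_mul_pos_right (a := a x) ?_ (ha x hx).le
  linear_combination hpos' + hcsub + hsol x hx

end InnerProductSpace

noncomputable def weight (σ m p t : ℝ) : ℝ := t ^ p * exp (-σ * t ^ m)

section Weight

variable {σ m p t : ℝ}

theorem weight_pos (ht : 0 < t) : 0 < weight σ m p t := by
  unfold weight; positivity

theorem rpow_mul_weight (ht : 0 < t) (q : ℝ) : t ^ q * weight σ m p t = weight σ m (p + q) t := by
  rw [weight, weight, rpow_add ht]; ring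

theorem weight_le_one (hσ : 0 ≤ σ) (ht : 1 ≤ t) (hp : p ≤ 0) : weight σ m p t ≤ 1 := by
  have hexp : exp (-σ * t ^ m) ≤ 1 :=
    exp_le_one_iff.2 (by nlinarith [rpow_nonneg (zero_le_one.trans ht) m])
  exact mul_le_one₀ (rpow_le_one_of_one_le_of_nonpos ht hp) (exp_pos _).le hexp

theorem tendsto_weight_atTop (hσ : 0 ≤ σ) (hp : p < 0) : Tendsto (weight σ m p) atTop (𝓝 0) := by
  refine squeeze_zero' (eventually_gt_atTop 0 |>.mono fun t ht => (weight_pos ht).le)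
    (eventually_gt_atTop 0 |>.mono fun t ht => ?_)
    (by simpa using tendsto_rpow_neg_atTop (neg_pos.2 hp))
  refine mul_le_of_le_one_right (rpow_nonneg ht.le _) (exp_le_one_iff.2 ?_)
  nlinarith [rpow_nonneg ht.le m]

theorem hasDerivAt_weight (ht : 0 < t) : HasDerivAt (weight σ m p)
    (p * weight σ m (p - 1) t - σ * m * weight σ m (p + m - 1) t) t := by
  have hpow := hasDerivAt_rpow_const (p := p) (Or.inl ht.ne')
  have hexp := ((hasDerivAt_rpow_const (p := m) (Or.inl ht.ne')).const_mul (-σ)).exp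
  refine (hpow.fun_mul hexp).congr_deriv ?_
  simp only [weight]
  rw [show p + m - 1 = p + (m - 1) by ring, rpow_add ht]
  ring

theorem contDiffAt_weight (ht : 0 < t) : ContDiffAt ℝ 2 (weight σ m p) t := by
  unfold weight
  have := contDiffAt_rpow_const_of_ne (n := 2) (p := p) ht.ne'
  have := contDiffAt_rpow_const_of_ne (n := 2) (p := m) ht.ne'
  fun_prop

theorem deriv_deriv_weight (ht : 0 < t) : deriv (deriv (weight σ m p)) t =
    p * (p - 1) * weight σ m (p - 2) t - σ * m * (2 * p + m - 1) * weight σ m (p + m - 2) t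
      + (σ * m) ^ 2 * weight σ m (p + 2 * m - 2) t := by
  have hderiv : deriv (weight σ m p) =ᶠ[𝓝 t]
      fun s => p * weight σ m (p - 1) s - σ * m * weight σ m (p + m - 1) s :=
    (eventually_gt_nhds ht).mono fun s hs => (hasDerivAt_weight hs).deriv
  rw [hderiv.deriv_eq, (((hasDerivAt_weight ht).const_mul p).fun_sub
    ((hasDerivAt_weight ht).const_mul (σ * m))).deriv]
  ring_nf

theorem radialLaplacian_weight (n : ℝ) (ht : 0 < t) : radialLaplacian n (weight σ m p) t =
    (4 * p * (p - 1) + 2 * n * p) * weight σ m (p - 1) t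
      - σ * m * (4 * (2 * p + m - 1) + 2 * n) * weight σ m (p + m - 1) t
      + 4 * (σ * m) ^ 2 * weight σ m (p + 2 * m - 1) t := by
  have hmul : ∀ q, t * weight σ m (q - 2) t = weight σ m (q - 1) t := fun q => by
    simpa [show q - 2 + 1 = q - 1 by ring] using rpow_mul_weight ht 1 (σ := σ) (m := m) (p := q - 2)
  rw [radialLaplacian, deriv_deriv_weight ht, (hasDerivAt_weight ht).deriv]
  linear_combination 4 * p * (p - 1) * hmul p - 4 * σ * m * (2 * p + m - 1) * hmul (p + m)
    + 4 * (σ * m) ^ 2 * hmul (p + 2 * m)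

end Weight

theorem eventually_quadratic_nonneg {a b c : ℝ} (ha : 0 < a) :
    ∀ᶠ s in atTop, 0 ≤ a * s ^ 2 + b * s + c := by
  filter_upwards [eventually_ge_atTop 1, eventually_ge_atTop ((|b| + |c|) / a)] with s hs1 hs
  have hs' : |b| + |c| ≤ a * s := by rwa [div_le_iff₀ ha, mul_comm] at hs
  nlinarith [neg_abs_le b, neg_abs_le c, abs_nonneg c]

theorem eventually_weight_subsolution {n α β lam0 σ m A : ℝ} (hm : 0 < m) (hσm : σ * m = 1 / 2)
    (hA : 4 * A = n + 2 * m - 2) (hβ : β / 2 = α / 2 + 2 * m - 1) (hlam0 : lam0 ≤ 0) :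
    ∀ᶠ t in atTop, (lam0 + t ^ (β / 2)) * (weight σ m (-A) t + weight σ m (-(A + m / 2)) t) ≤
      (1 + t ^ (α / 2)) * (radialLaplacian n (weight σ m (-A)) t
        + radialLaplacian n (weight σ m (-(A + m / 2))) t) := by
  set c := 4 * -A * (-A - 1) + 2 * n * -A
  set c' := 4 * -(A + m / 2) * (-(A + m / 2) - 1) + 2 * n * -(A + m / 2)
  filter_upwards [eventually_gt_atTop 0, (tendsto_rpow_atTop (half_pos hm)).eventually
    (eventually_quadratic_nonneg (b := c) (c := c') (mul_pos two_pos hm))] with t ht hquad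
  set s := t ^ (m / 2) with hs
  set u := weight σ m (-(A + m / 2) - 1) t
  have hpow : ∀ j k : ℕ, t ^ ((j : ℝ) + k * (m / 2)) = t ^ j * s ^ k := fun j k => by
    rw [rpow_add ht, rpow_natCast, mul_comm (k : ℝ), Real.rpow_mul ht.le, rpow_natCast]
  -- every weight below is `t ^ j * s ^ k * u`, with `u` the one of smallest exponent
  have hw : ∀ (q : ℝ) (j k : ℕ), q = -(A + m / 2) - 1 + (j + k * (m / 2)) →
      weight σ m q t = t ^ j * s ^ k * u := fun q j k hq => by
    rw [← hpow, rpow_mul_weight ht, hq]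
  have hb : t * t ^ (β / 2) = t ^ (α / 2) * s ^ 4 := by
    have hs4 : s ^ 4 = t ^ (2 * m) := by
      rw [hs, ← rpow_natCast, ← Real.rpow_mul ht.le]; ring_nf
    rw [hs4, ← rpow_add ht, show α / 2 + 2 * m = 1 + β / 2 by linarith, rpow_add ht, rpow_one]
  rw [radialLaplacian_weight n ht, radialLaplacian_weight n ht, hσm,
    hw (-A) 1 1 (by push_cast; ring), hw (-(A + m / 2)) 1 0 (by push_cast; ring),
    hw (-A - 1) 0 1 (by push_cast; ring), hw (-A + m - 1) 0 3 (by push_cast; ring),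
    hw (-A + 2 * m - 1) 0 5 (by push_cast; ring),
    hw (-(A + m / 2) + m - 1) 0 2 (by push_cast; ring),
    hw (-(A + m / 2) + 2 * m - 1) 0 4 (by push_cast; ring), hw (-(A + m / 2) - 1) 0 0 (by simp)]
  have hu : 0 < u := weight_pos ht
  have hs0 : 0 < s := rpow_pos_of_pos ht _
  have ha : 0 < t ^ (α / 2) := rpow_pos_of_pos ht _
  have := mul_nonneg (neg_nonneg.2 hlam0) ht.le
  have hsum : 0 ≤ (1 + t ^ (α / 2)) * (2 * m * s ^ 2 + c * s + c') * u + (s ^ 5 + s ^ 4) * u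
      + -lam0 * t * u * (s + 1) := by positivity
  simp only [pow_zero, pow_one, one_mul, mul_one]
  linear_combination hsum - (1 + t ^ (α / 2)) * (s ^ 3 + s ^ 2) * u * hA + (s + 1) * u * hb

section Barrier

variable {E : Type*} [NormedAddCommGroup E]

noncomputable def barrier (σ m A : ℝ) (x : E) : ℝ :=
  weight σ m (-A) (‖x‖ ^ 2) + weight σ m (-(A + m / 2)) (‖x‖ ^ 2)

variable {σ m A : ℝ}

theorem contDiffAt_barrier [InnerProductSpace ℝ E] {x : E} (hx : x ≠ 0) :
    ContDiffAt ℝ 2 (barrier σ m A) x := by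
  have ht : 0 < ‖x‖ ^ 2 := by positivity
  exact ((contDiffAt_weight ht).comp x (contDiff_norm_sq ℝ).contDiffAt).add
    ((contDiffAt_weight ht).comp x (contDiff_norm_sq ℝ).contDiffAt)

theorem laplacian_barrier [InnerProductSpace ℝ E] [FiniteDimensional ℝ E] {x : E} (hx : x ≠ 0) :
    Δ (barrier σ m A : E → ℝ) x = radialLaplacian (Module.finrank ℝ E) (weight σ m (-A)) (‖x‖ ^ 2)
      + radialLaplacian (Module.finrank ℝ E) (weight σ m (-(A + m / 2))) (‖x‖ ^ 2) := by
  have ht : 0 < ‖x‖ ^ 2 := by positivity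
  rw [← laplacian_comp_norm_sq (contDiffAt_weight ht),
    ← laplacian_comp_norm_sq (contDiffAt_weight ht), ← ContDiffAt.laplacian_add]
  · rfl
  · exact (contDiffAt_weight ht).comp x (contDiff_norm_sq ℝ).contDiffAt
  · exact (contDiffAt_weight ht).comp x (contDiff_norm_sq ℝ).contDiffAt

theorem tendsto_barrier_cocompact [ProperSpace E] (hσ : 0 ≤ σ) (hm : 0 < m) (hA : 0 < A) :
    Tendsto (barrier σ m A : E → ℝ) (cocompact E) (𝓝 0) := by
  have hsq : Tendsto (fun x : E => ‖x‖ ^ 2) (cocompact E) atTop :=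
    (tendsto_pow_atTop two_ne_zero).comp tendsto_norm_cocompact_atTop
  have hA' : -(A + m / 2) < 0 := by linarith
  have h := ((tendsto_weight_atTop (m := m) hσ (neg_neg_of_pos hA)).comp hsq).add
    ((tendsto_weight_atTop (m := m) hσ hA').comp hsq)
  rw [zero_add] at h
  exact h

theorem barrier_le_two (hσ : 0 ≤ σ) (hm : 0 < m) (hA : 0 ≤ A) {x : E} (hx : 1 ≤ ‖x‖) :
    barrier σ m A x ≤ 2 := by
  have ht : 1 ≤ ‖x‖ ^ 2 := one_le_pow₀ hx
  rw [barrier]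
  linarith [weight_le_one (m := m) hσ ht (neg_nonpos.2 hA),
    weight_le_one (m := m) hσ ht (by linarith : -(A + m / 2) ≤ 0)]

theorem weight_le_barrier {x : E} (hx : x ≠ 0) : weight σ m (-A) (‖x‖ ^ 2) ≤ barrier σ m A x :=
  le_add_of_nonneg_right (weight_pos (by positivity)).le

theorem exists_radius_barrier_subsolution [InnerProductSpace ℝ E] [FiniteDimensional ℝ E]
    {α β lam0 : ℝ} (hm : 0 < m) (hσm : σ * m = 1 / 2)
    (hA : 4 * A = Module.finrank ℝ E + 2 * m - 2) (hβ : β / 2 = α / 2 + 2 * m - 1) (hβ₀ : 0 < β)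
    (hlam0 : lam0 ≤ 0) :
    ∃ R ≥ 1, ∀ x : E, R ≤ ‖x‖ → 0 < lam0 + ‖x‖ ^ β ∧
      (lam0 + ‖x‖ ^ β) * barrier σ m A x ≤ (1 + ‖x‖ ^ α) * Δ (barrier σ m A : E → ℝ) x := by
  obtain ⟨T, hT⟩ := ((eventually_weight_subsolution (α := α) hm hσm hA hβ hlam0).and
    ((tendsto_rpow_atTop (half_pos hβ₀)).eventually_gt_atTop (-lam0))).exists_forall_of_atTop
  refine ⟨max 1 T, le_max_left _ _, fun x hx => ?_⟩
  have hx1 : 1 ≤ ‖x‖ := (le_max_left _ _).trans hx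
  have hx0 : x ≠ 0 := norm_pos_iff.1 (one_pos.trans_le hx1)
  have hpow : ∀ γ : ℝ, ‖x‖ ^ γ = (‖x‖ ^ 2) ^ (γ / 2) := fun γ => by
    rw [← Real.rpow_natCast_mul (norm_nonneg x)]; ring_nf
  obtain ⟨hsub, hpos⟩ := hT (‖x‖ ^ 2) (by nlinarith [le_max_right 1 T])
  rw [hpow β, hpow α, laplacian_barrier hx0]
  exact ⟨by linarith, hsub⟩

theorem exists_mul_weight_le_of_eigenfunction [InnerProductSpace ℝ E] [FiniteDimensional ℝ E]
    {α β lam0 : ℝ} {ψ : E → ℝ} (hm : 0 < m) (hσm : σ * m = 1 / 2) (hA₀ : 0 < A)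
    (hA : 4 * A = Module.finrank ℝ E + 2 * m - 2) (hβ : β / 2 = α / 2 + 2 * m - 1) (hβ₀ : 0 < β)
    (hlam0 : lam0 ≤ 0) (hpos : ∀ x, 0 < ψ x) (hψ : ContDiff ℝ 2 ψ)
    (hdecay : Tendsto ψ (cocompact E) (𝓝 0))
    (heigen : ∀ x, (1 + ‖x‖ ^ α) * Δ ψ x = (lam0 + ‖x‖ ^ β) * ψ x) :
    ∃ c > 0, ∀ x : E, 1 ≤ ‖x‖ → c * weight σ m (-A) (‖x‖ ^ 2) ≤ ψ x := by
  have hσ : 0 ≤ σ := by nlinarith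
  obtain ⟨R, hR, hsub⟩ := exists_radius_barrier_subsolution hm hσm hA hβ hβ₀ hlam0
  obtain ⟨x₁, -, hmin⟩ := (isCompact_closedBall (0 : E) R).exists_isMinOn
    (Metric.nonempty_closedBall.2 (by linarith)) hψ.continuous.continuousOn
  have hε := hpos x₁
  have hx0 : ∀ x : E, 1 ≤ ‖x‖ → x ≠ 0 := fun x hx => norm_pos_iff.1 (by linarith)
  have hcomp : ∀ x, R ≤ ‖x‖ → ψ x₁ / 2 * barrier σ m A x ≤ ψ x := by
    refine le_of_subsolution_of_solution (half_pos hε).le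
      (fun x hx => contDiffAt_barrier (hx0 x (hR.trans hx))) hψ
      (tendsto_barrier_cocompact hσ hm hA₀) hdecay (fun x _ => by positivity)
      (fun x hx => (hsub x hx.le).1) (fun x hx => (hsub x hx.le).2) (fun x _ => heigen x)
      (fun x hx => ?_)
    calc ψ x₁ / 2 * barrier σ m A x ≤ ψ x₁ / 2 * 2 := by
          gcongr; exact barrier_le_two hσ hm hA₀.le (hR.trans hx.ge)
      _ = ψ x₁ := by ring
      _ ≤ ψ x := hmin (mem_closedBall_zero_iff.2 hx.le)
  refine ⟨ψ x₁ / 2, half_pos hε, fun x hx => ?_⟩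
  rcases le_total R ‖x‖ with hxR | hxR
  · exact (mul_le_mul_of_nonneg_left (weight_le_barrier (hx0 x hx)) (by positivity)).trans
      (hcomp x hxR)
  · calc ψ x₁ / 2 * weight σ m (-A) (‖x‖ ^ 2) ≤ ψ x₁ / 2 * 1 := by
          gcongr; exact weight_le_one hσ (one_le_pow₀ hx) (by linarith)
      _ ≤ ψ x₁ := by linarith
      _ ≤ ψ x := hmin (mem_closedBall_zero_iff.2 hxR)

end Barrier

theorem laplacian_eq_laplacian {N : ℕ} (f : EuclideanSpace ℝ (Fin N) → ℝ) : laplacian f = Δ f := by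
  rw [laplacian_eq_iteratedFDeriv_orthonormalBasis f (EuclideanSpace.basisFun (Fin N) ℝ)]
  ext x
  simp [laplacian, EuclideanSpace.basisFun_apply]

theorem ground_state_lower_bound_general
    (N : ℕ) (hN : 2 < N) (α β lam0 : ℝ) (hα : 2 ≤ α) (hβ : α - 2 < β) (hlam0 : lam0 < 0)
    (ψ : EuclideanSpace ℝ (Fin N) → ℝ)
    (hpos : ∀ x, 0 < ψ x)
    (hsmooth : ContDiff ℝ 2 ψ)
    (hdecay : Tendsto ψ (cocompact _) (nhds 0))
    (heigen : ∀ x : EuclideanSpace ℝ (Fin N),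
      (1 + ‖x‖ ^ α) * laplacian ψ x - ‖x‖ ^ β * ψ x = lam0 * ψ x) :
    ∃ C₁ > 0, ∀ x : EuclideanSpace ℝ (Fin N), 1 ≤ ‖x‖ →
      C₁ * ‖x‖ ^ (-(((N : ℝ) - 1) / 2) - (β - α) / 4) *
        Real.exp (-(2 / (β - α + 2)) * ‖x‖ ^ ((β - α + 2) / 2)) ≤ ψ x := by
  have hN' : (3 : ℝ) ≤ N := by exact_mod_cast hN
  have hβα : 0 < β - α + 2 := by linarith
  obtain ⟨C, hC, hle⟩ := exists_mul_weight_le_of_eigenfunction (E := EuclideanSpace ℝ (Fin N))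
    (σ := 2 / (β - α + 2)) (m := (β - α + 2) / 4) (A := ((N : ℝ) - 1) / 4 + (β - α) / 8)
    (α := α) (β := β) (by positivity) (by field_simp; ring) (by linarith)
    (by rw [finrank_euclideanSpace_fin]; ring) (by ring) (by linarith) hlam0.le hpos hsmooth hdecay
    (fun x => by rw [← laplacian_eq_laplacian]; linarith [heigen x])
  refine ⟨C, hC, fun x hx => le_of_eq_of_le ?_ (hle x hx)⟩
  rw [mul_assoc, weight, ← Real.rpow_natCast_mul (norm_nonneg x),
    ← Real.rpow_natCast_mul (norm_nonneg x)]
  ring_nf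

/-- Lower bound for the ground state of `A = (1+|x|^α)Δ - |x|^β`. -/
theorem ground_state_lower_bound
    (N : ℕ) (hN : 2 < N) (α β lam0 : ℝ) (hα : 2 ≤ α) (hβ : α - 2 < β) (hlam0 : lam0 < 0)
    (ψ : EuclideanSpace ℝ (Fin N) → ℝ)
    (hpos : ∀ x, 0 < ψ x)
    (hbdd : ∃ M : ℝ, ∀ x, ψ x ≤ M)
    (hrad : ∀ x y : EuclideanSpace ℝ (Fin N), ‖x‖ = ‖y‖ → ψ x = ψ y)
    (hsmooth : ContDiff ℝ 2 ψ)
    (hdecay : Tendsto ψ (cocompact _) (nhds 0))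
    (heigen : ∀ x : EuclideanSpace ℝ (Fin N),
      (1 + ‖x‖ ^ α) * laplacian ψ x - ‖x‖ ^ β * ψ x = lam0 * ψ x) :
    ∃ C₁ > 0, ∀ x : EuclideanSpace ℝ (Fin N), 1 ≤ ‖x‖ →
      C₁ * ‖x‖ ^ (-(((N : ℝ) - 1) / 2) - (β - α) / 4) *
        Real.exp (-(2 / (β - α + 2)) * ‖x‖ ^ ((β - α + 2) / 2)) ≤ ψ x :=
  ground_state_lower_bound_general N hN α β lam0 hα hβ hlam0 ψ hpos hsmooth hdecay heigen
end

section
/- Let N > 2, α ≥ 2, β > α − 2, and set V(x) := |x|^β, b := (β−α+2)/(β+α−2), and let μ be the measure on ℝ^N with dμ(x) = (1+|x|^α)^{−1} dx. Let ψ : ℝ^N → (0,∞) be continuous and suppose there is C₁ > 0 such that ψ(x) ≥ C₁ |x|^{−(N−1)/2 − (β−α)/4} exp(−(2/(β−α+2)) |x|^{(β−α+2)/2}) for all |x| ≥ 1. Then there exist constants K₁, K₂ > 0 such that for every ε > 0 and every u ∈ C_c^∞(ℝ^N): ∫_{ℝ^N} (−log ψ(x)) |u(x)|² dμ(x) ≤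 ε ( ∫_{ℝ^N} |∇u(x)|² dx + ∫_{ℝ^N} V(x)|u(x)|² dμ(x) ) + (K₁ ε^{−b} + K₂) ∫_{ℝ^N} |u(x)|² dμ(x). -/
open MeasureTheory Filter Real

/-- The measure `dμ(x) = (1+|x|^α)^{-1} dx` on `ℝ^N`. -/
noncomputable def muMeas (N : ℕ) (α : ℝ) : Measure (EuclideanSpace ℝ (Fin N)) :=
  volume.withDensity fun x : EuclideanSpace ℝ (Fin N) => ENNReal.ofReal (1 + ‖x‖ ^ α)⁻¹

/-- Estimate (3.4): the potential `-log ψ` is form-bounded with respect to the form `a_μ`,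
with constant of order `ε^{-b}`, `b = (β-α+2)/(β+α-2)`. -/
theorem log_ground_state_form_bound
    (N : ℕ) (hN : 2 < N) (α β : ℝ) (hα : 2 ≤ α) (hβ : α - 2 < β)
    (ψ : EuclideanSpace ℝ (Fin N) → ℝ) (hψcont : Continuous ψ) (hψpos : ∀ x, 0 < ψ x)
    (C₁ : ℝ) (hC₁ : 0 < C₁)
    (hlow : ∀ x : EuclideanSpace ℝ (Fin N), 1 ≤ ‖x‖ →
      C₁ * ‖x‖ ^ (-(((N : ℝ) - 1) / 2) - (β - α) / 4) *
        Real.exp (-(2 / (β - α + 2)) * ‖x‖ ^ ((β - α + 2) / 2)) ≤ ψ x) :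
    ∃ K₁ > 0, ∃ K₂ > 0, ∀ ε > 0, ∀ u : EuclideanSpace ℝ (Fin N) → ℝ,
      ContDiff ℝ (⊤ : ℕ∞) u → HasCompactSupport u →
      ∫ x, (-Real.log (ψ x)) * u x ^ 2 ∂(muMeas N α) ≤
        ε * ((∫ x, ‖gradient u x‖ ^ 2) +
              ∫ x, ‖x‖ ^ β * u x ^ 2 ∂(muMeas N α)) +
          (K₁ * ε ^ (-((β - α + 2) / (β + α - 2))) + K₂) * ∫ x, u x ^ 2 ∂(muMeas N α) := by
  have hβpos : 0 < β := by linarith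
  have hnum : 0 < β - α + 2 := by linarith
  have hden : 0 < β + α - 2 := by linarith
  set s : ℝ := (β - α + 2) / 2 with hs_def
  have hspos : 0 < s := by positivity
  have hβs : 0 < β - s := by rw [hs_def]; linarith
  set b : ℝ := (β - α + 2) / (β + α - 2) with hb_def
  have hbpos : 0 < b := div_pos hnum hden
  have hbs : (β - s) * b = s := by
    rw [hs_def, hb_def]; field_simp; ring
  -- minimum of ψ on the closed unit ball
  obtain ⟨x₀, hx₀mem, hx₀min⟩ :=
    (isCompact_closedBall (0 : EuclideanSpace ℝ (Fin N)) 1).exists_isMinOn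
      ⟨0, Metric.mem_closedBall_self zero_le_one⟩ hψcont.continuousOn
  set m : ℝ := ψ x₀ with hm_def
  have hm : 0 < m := hψpos x₀
  set a : ℝ := ((N : ℝ) - 1) / 2 + (β - α) / 4 with ha_def
  set c : ℝ := 2 / (β - α + 2) with hc_def
  have hcpos : 0 < c := by positivity
  set C₂ : ℝ := |a| / s + c with hC₂_def
  have hC₂ : 0 < C₂ := add_pos_of_nonneg_of_pos (div_nonneg (abs_nonneg a) hspos.le) hcpos
  set M : ℝ := |Real.log C₁| + |Real.log m| + 1 with hM_def
  have hMpos : 0 < M := by positivity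
  set K₁ : ℝ := C₂ * C₂ ^ b with hK₁_def
  have hK₁ : 0 < K₁ := by
    have : 0 < C₂ ^ b := Real.rpow_pos_of_pos hC₂ b
    positivity
  have hmin : ∀ x ∈ Metric.closedBall (0 : EuclideanSpace ℝ (Fin N)) 1, m ≤ ψ x := by
    intro x hx
    rw [hm_def]; exact hx₀min hx
  clear_value s b m a c C₂ M K₁
  refine ⟨K₁, hK₁, M, hMpos, ?_⟩
  -- pointwise logarithmic bound
  have hlog : ∀ x, -Real.log (ψ x) ≤ C₂ * ‖x‖ ^ s + M := by
    intro x
    rcases le_or_gt 1 ‖x‖ with hx | hx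
    · have hxpos : (0 : ℝ) < ‖x‖ := lt_of_lt_of_le one_pos hx
      have hrpos : 0 < ‖x‖ ^ (-(((N : ℝ) - 1) / 2) - (β - α) / 4) :=
        Real.rpow_pos_of_pos hxpos _
      have h1 : Real.log C₁ + (-(((N : ℝ) - 1) / 2) - (β - α) / 4) * Real.log ‖x‖ +
          (-c * ‖x‖ ^ s) ≤ Real.log (ψ x) := by
        have heq : Real.log (C₁ * ‖x‖ ^ (-(((N : ℝ) - 1) / 2) - (β - α) / 4) *
            Real.exp (-c * ‖x‖ ^ s)) =
            Real.log C₁ + (-(((N : ℝ) - 1) / 2) - (β - α) / 4) * Real.log ‖x‖ +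
            (-c * ‖x‖ ^ s) := by
          rw [Real.log_mul (by positivity) (Real.exp_ne_zero _),
            Real.log_mul hC₁.ne' hrpos.ne', Real.log_rpow hxpos, Real.log_exp]
        rw [← heq]
        exact Real.log_le_log (by positivity) (hlow x hx)
      have hlogx0 : 0 ≤ Real.log ‖x‖ := Real.log_nonneg hx
      have hlogxs : s * Real.log ‖x‖ ≤ ‖x‖ ^ s := by
        have := Real.log_le_sub_one_of_pos (Real.rpow_pos_of_pos hxpos s)
        rw [Real.log_rpow hxpos] at this
        linarith
      have hlogx : Real.log ‖x‖ ≤ ‖x‖ ^ s / s := by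
        rw [le_div_iff₀ hspos]; linarith [hlogxs]
      have habs : a * Real.log ‖x‖ ≤ |a| * (‖x‖ ^ s / s) := by
        calc a * Real.log ‖x‖ ≤ |a| * Real.log ‖x‖ :=
              mul_le_mul_of_nonneg_right (le_abs_self a) hlogx0
          _ ≤ |a| * (‖x‖ ^ s / s) := mul_le_mul_of_nonneg_left hlogx (abs_nonneg a)
      have hexp : -(((N : ℝ) - 1) / 2) - (β - α) / 4 = -a := by rw [ha_def]; ring
      rw [hexp] at h1
      have : -Real.log (ψ x) ≤ -Real.log C₁ + a * Real.log ‖x‖ + c * ‖x‖ ^ s := by linarith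
      have h2 : -Real.log C₁ ≤ |Real.log C₁| := neg_le_abs _
      have h3 : |a| * (‖x‖ ^ s / s) = (|a| / s) * ‖x‖ ^ s := by ring
      rw [hC₂_def, hM_def]
      have h5 : (|a| / s + c) * ‖x‖ ^ s = |a| / s * ‖x‖ ^ s + c * ‖x‖ ^ s := by ring
      have h6 : 0 ≤ |Real.log m| := abs_nonneg _
      have h7 : -Real.log (ψ x) ≤ |Real.log C₁| + |a| * (‖x‖ ^ s / s) + c * ‖x‖ ^ s := by
        linarith
      rw [h3] at h7
      linarith
    · have hxmem : x ∈ Metric.closedBall (0 : EuclideanSpace ℝ (Fin N)) 1 :=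
        mem_closedBall_zero_iff.2 hx.le
      have : -Real.log (ψ x) ≤ -Real.log m := by
        have := Real.log_le_log hm (hmin x hxmem)
        linarith
      have h2 : -Real.log m ≤ |Real.log m| := neg_le_abs _
      have h3 : 0 ≤ C₂ * ‖x‖ ^ s := mul_nonneg hC₂.le (Real.rpow_nonneg (norm_nonneg x) s)
      rw [hM_def]
      have h4 : 0 ≤ |Real.log C₁| := abs_nonneg _
      linarith
  -- Young-type inequality
  have hyoung : ∀ ε : ℝ, 0 < ε → ∀ t : ℝ, 0 ≤ t →
      C₂ * t ^ s ≤ ε * t ^ β + K₁ * ε ^ (-b) := by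
    intro ε hε t ht
    have hεb : 0 < ε ^ (-b) := Real.rpow_pos_of_pos hε _
    rcases eq_or_lt_of_le ht with rfl | htpos
    · rw [Real.zero_rpow hspos.ne', Real.zero_rpow hβpos.ne']
      have : 0 < K₁ * ε ^ (-b) := mul_pos hK₁ hεb
      linarith
    rcases le_or_gt C₂ (ε * t ^ (β - s)) with h | h
    · have h1 : C₂ * t ^ s ≤ ε * t ^ (β - s) * t ^ s :=
        mul_le_mul_of_nonneg_right h (Real.rpow_nonneg ht s)
      have h2 : ε * t ^ (β - s) * t ^ s = ε * t ^ β := by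
        rw [mul_assoc, ← Real.rpow_add htpos]; ring_nf
      have h3 : 0 ≤ K₁ * ε ^ (-b) := le_of_lt (mul_pos hK₁ hεb)
      linarith [h1.trans_eq h2]
    · have h1 : t ^ (β - s) ≤ C₂ / ε := (le_div_iff₀ hε).2 (by rw [mul_comm]; exact h.le)
      have h2 : (t ^ (β - s)) ^ b ≤ (C₂ / ε) ^ b :=
        Real.rpow_le_rpow (Real.rpow_nonneg ht _) h1 hbpos.le
      have h3 : (t ^ (β - s)) ^ b = t ^ s := by
        rw [← Real.rpow_mul ht, hbs]
      have h4 : (C₂ / ε) ^ b = C₂ ^ b * ε ^ (-b) := by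
        rw [Real.div_rpow hC₂.le hε.le, Real.rpow_neg hε.le, div_eq_mul_inv]
      rw [h3, h4] at h2
      have h5 : C₂ * t ^ s ≤ C₂ * (C₂ ^ b * ε ^ (-b)) :=
        mul_le_mul_of_nonneg_left h2 hC₂.le
      have h6 : 0 ≤ ε * t ^ β := mul_nonneg hε.le (Real.rpow_nonneg ht β)
      have h7 : C₂ * (C₂ ^ b * ε ^ (-b)) = K₁ * ε ^ (-b) := by rw [hK₁_def]; ring
      linarith
  -- combined pointwise bound
  have hcomb : ∀ ε : ℝ, 0 < ε → ∀ x,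
      -Real.log (ψ x) ≤ ε * ‖x‖ ^ β + (K₁ * ε ^ (-b) + M) := by
    intro ε hε x
    have := hyoung ε hε ‖x‖ (norm_nonneg x)
    linarith [hlog x]
  -- measure comparison: muMeas ≤ volume
  have hμle : muMeas N α ≤ volume := by
    rw [muMeas, Measure.le_iff]
    intro sset hsset
    rw [withDensity_apply _ hsset]
    calc ∫⁻ x in sset, ENNReal.ofReal (1 + ‖x‖ ^ α)⁻¹ ∂volume
        ≤ ∫⁻ _ in sset, 1 ∂volume := by
          refine lintegral_mono fun x => ?_
          refine ENNReal.ofReal_le_one.2 ?_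
          have h1 : (0 : ℝ) ≤ ‖x‖ ^ α := Real.rpow_nonneg (norm_nonneg x) α
          rw [inv_le_one_iff₀]
          right; linarith
      _ = volume sset := setLIntegral_one sset
  intro ε hε u hu hsupp
  have hucont : Continuous u := hu.continuous
  have husupp : HasCompactSupport (fun x => u x ^ 2) := by
    have := hsupp.comp_left (g := fun t : ℝ => t ^ 2) (by norm_num)
    exact this
  have hu2cont : Continuous fun x : EuclideanSpace ℝ (Fin N) => u x ^ 2 := hucont.pow 2
  have hlogcont : Continuous fun x => -Real.log (ψ x) :=
    (hψcont.log fun x => (hψpos x).ne').neg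
  have hnormcont : Continuous fun x : EuclideanSpace ℝ (Fin N) => ‖x‖ ^ β :=
    continuous_norm.rpow_const fun x => Or.inr hβpos.le
  -- integrability
  have hint1 : Integrable (fun x => (-Real.log (ψ x)) * u x ^ 2) (muMeas N α) :=
    ((hlogcont.mul hu2cont).integrable_of_hasCompactSupport
      (husupp.mul_left)).mono_measure hμle
  have hint2 : Integrable (fun x => ‖x‖ ^ β * u x ^ 2) (muMeas N α) :=
    ((hnormcont.mul hu2cont).integrable_of_hasCompactSupport
      (husupp.mul_left)).mono_measure hμle
  have hint3 : Integrable (fun x => u x ^ 2) (muMeas N α) :=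
    (hu2cont.integrable_of_hasCompactSupport husupp).mono_measure hμle
  have key : ∫ x, (-Real.log (ψ x)) * u x ^ 2 ∂(muMeas N α) ≤
      ∫ x, (ε * (‖x‖ ^ β * u x ^ 2) + (K₁ * ε ^ (-b) + M) * u x ^ 2) ∂(muMeas N α) := by
    refine integral_mono hint1 ((hint2.const_mul ε).add (hint3.const_mul _)) fun x => ?_
    have h1 := hcomb ε hε x
    have h2 : 0 ≤ u x ^ 2 := sq_nonneg _
    have h3 := mul_le_mul_of_nonneg_right h1 h2
    have h4 : (ε * ‖x‖ ^ β + (K₁ * ε ^ (-b) + M)) * u x ^ 2 =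
        ε * (‖x‖ ^ β * u x ^ 2) + (K₁ * ε ^ (-b) + M) * u x ^ 2 := by ring
    linarith
  rw [integral_add (hint2.const_mul ε) (hint3.const_mul _), integral_const_mul,
    integral_const_mul] at key
  have hG : 0 ≤ ∫ x, ‖gradient u x‖ ^ 2 := integral_nonneg fun x => by positivity
  have hεG : 0 ≤ ε * ∫ x, ‖gradient u x‖ ^ 2 := mul_nonneg hε.le hG
  rw [mul_add]
  linarith [key, hεG]
end

section
/- On-diagonal heat kernel lower bound (Proposition 3.2): Let N > 2, α ≥ 2, β > α − 2, λ₀ < 0, and let μ be the measure on ℝ^N with dμ(x) = (1+|x|^α)^{−1} dx. Let ψ : ℝ^N → (0,∞) be continuous, bounded, square integrable with respect to μ, and suppose there exists C₁ > 0 with ψ(x) ≥ C₁ |x|^{−(N−1)/2 − (β−α)/4} exp(−(2/(β−α+2)) |x|^{(β−α+2)/2}) for |x| ≥ 1. Let k : (0,∞) × ℝ^N × ℝ^N → [0,∞) be measurable and define k_μ(t,x,y) := (1+|y|^α) k(t,x,y); assume k_μ is symmetric in (x,y), satisfies the Chapman–Kolmogorov identity k_μ(t+s,x,y) = ∫ k_μ(t,x,z)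 k_μ(s,z,y) dμ(z), k_μ(t,x,·) ∈ L²(μ) for all t > 0 and x, and ∫_{ℝ^N} k(t,x,y) ψ(y) dy = e^{λ₀ t} ψ(x) for all t > 0 and x. Then there exists M > 0 such that for all t > 0 and all x with |x| ≥ 1: k(t,x,x) ≥ M e^{λ₀ t} ( |x|^{(α−β)/4 − (N−1)/2} exp(−(2/(β−α+2)) |x|^{(β−α+2)/2}) )² (1+|x|^α)^{−1}. -/
/-!
Write `k_μ(s,x,y) = (1+|y|^α) k(s,x,y)`. By symmetry and Chapman–Kolmogorov,
`‖k_μ(s,x,·)‖²_{L²(μ)} = k_μ(2s,x,x)`, while the eigenfunction identity reads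
`∫ k_μ(s,x,y) ψ(y) dμ(y) = e^{λ₀ s} ψ(x)`. Cauchy–Schwarz therefore gives
`e^{2λ₀ s} ψ(x)² ≤ k_μ(2s,x,x) ‖ψ‖²_{L²(μ)}`; take `s = t/2` and insert the lower bound
on `ψ`.
-/

open MeasureTheory Filter Real

theorem integral_weight_mul_muMeas (N : ℕ) (α : ℝ) (f : EuclideanSpace ℝ (Fin N) → ℝ) :
    ∫ y, (1 + ‖y‖ ^ α) * f y ∂(muMeas N α) = ∫ y, f y := by
  have hdens : Measurable fun x : EuclideanSpace ℝ (Fin N) =>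
      ENNReal.ofReal (1 + ‖x‖ ^ α)⁻¹ :=
    (measurable_const.add (measurable_norm.pow_const α)).inv.ennreal_ofReal
  rw [muMeas, integral_withDensity_eq_integral_toReal_smul hdens
    (.of_forall fun _ => ENNReal.ofReal_lt_top)]
  refine integral_congr_ae (.of_forall fun y => ?_)
  have hw : 0 < 1 + ‖y‖ ^ α := by positivity
  simp only [smul_eq_mul, ENNReal.toReal_ofReal (inv_nonneg.2 hw.le), ← mul_assoc,
    inv_mul_cancel₀ hw.ne', one_mul]

section

variable {X : Type*} [MeasurableSpace X] {μ : Measure X}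

theorem sq_integral_mul_le_integral_sq_mul_integral_sq {f g : X → ℝ}
    (hf : MemLp f 2 μ) (hg : MemLp g 2 μ) :
    (∫ a, f a * g a ∂μ) ^ 2 ≤ (∫ a, f a ^ 2 ∂μ) * ∫ a, g a ^ 2 ∂μ := by
  have hHolder := integral_mul_norm_le_Lp_mul_Lq (μ := μ) Real.HolderConjugate.two_two
    (by simpa using hf) (by simpa using hg)
  simp only [Real.norm_eq_abs, Real.rpow_two, sq_abs, ← Real.sqrt_eq_rpow] at hHolder
  calc (∫ a, f a * g a ∂μ) ^ 2 ≤ (∫ a, |f a| * |g a| ∂μ) ^ 2 := by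
        rw [← sq_abs]
        refine pow_le_pow_left₀ (abs_nonneg _) ?_ 2
        simpa only [abs_mul] using abs_integral_le_integral_abs (f := fun a => f a * g a)
    _ ≤ (√(∫ a, f a ^ 2 ∂μ) * √(∫ a, g a ^ 2 ∂μ)) ^ 2 :=
        pow_le_pow_left₀ (integral_nonneg fun _ => by positivity) hHolder 2
    _ = (∫ a, f a ^ 2 ∂μ) * ∫ a, g a ^ 2 ∂μ := by
        rw [mul_pow, sq_sqrt (integral_nonneg fun _ => sq_nonneg _),
          sq_sqrt (integral_nonneg fun _ => sq_nonneg _)]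

variable {p : ℝ → X → X → ℝ} {s : ℝ} {x : X}

theorem integral_sq_eq_diag_of_chapmanKolmogorov (hsymm : ∀ z, p s z x = p s x z)
    (hCK : p (s + s) x x = ∫ z, p s x z * p s z x ∂μ) :
    ∫ z, p s x z ^ 2 ∂μ = p (s + s) x x := by
  simp only [hCK, hsymm, sq]

theorem diag_nonneg_of_chapmanKolmogorov (hsymm : ∀ z, p s z x = p s x z)
    (hCK : p (s + s) x x = ∫ z, p s x z * p s z x ∂μ) :
    0 ≤ p (s + s) x x :=
  integral_sq_eq_diag_of_chapmanKolmogorov hsymm hCK ▸ integral_nonneg fun _ => sq_nonneg _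

theorem exp_mul_sq_le_diag_mul_integral_sq (hsymm : ∀ z, p s z x = p s x z)
    (hCK : p (s + s) x x = ∫ z, p s x z * p s z x ∂μ) (hp : MemLp (p s x) 2 μ)
    {φ : X → ℝ} {lam : ℝ} (hφ : MemLp φ 2 μ)
    (heig : ∫ z, p s x z * φ z ∂μ = Real.exp (lam * s) * φ x) :
    Real.exp (lam * (s + s)) * φ x ^ 2 ≤ p (s + s) x x * ∫ z, φ z ^ 2 ∂μ := by
  calc Real.exp (lam * (s + s)) * φ x ^ 2 = (∫ z, p s x z * φ z ∂μ) ^ 2 := by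
        rw [heig, mul_add, Real.exp_add]; ring
    _ ≤ (∫ z, p s x z ^ 2 ∂μ) * ∫ z, φ z ^ 2 ∂μ :=
        sq_integral_mul_le_integral_sq_mul_integral_sq hp hφ
    _ = p (s + s) x x * ∫ z, φ z ^ 2 ∂μ := by
        rw [integral_sq_eq_diag_of_chapmanKolmogorov hsymm hCK]

end

theorem on_diagonal_heat_kernel_lower_bound_general
    (N : ℕ) (α β lam0 : ℝ)
    (ψ : EuclideanSpace ℝ (Fin N) → ℝ)
    (hψL2 : MemLp ψ 2 (muMeas N α))
    (C₁ : ℝ) (hC₁ : 0 < C₁)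
    (hψlow : ∀ x : EuclideanSpace ℝ (Fin N), 1 ≤ ‖x‖ →
      C₁ * ‖x‖ ^ (-(((N : ℝ) - 1) / 2) - (β - α) / 4) *
        Real.exp (-(2 / (β - α + 2)) * ‖x‖ ^ ((β - α + 2) / 2)) ≤ ψ x)
    (k : ℝ → EuclideanSpace ℝ (Fin N) → EuclideanSpace ℝ (Fin N) → ℝ)
    (hsymm : ∀ t > (0 : ℝ), ∀ x y,
      (1 + ‖y‖ ^ α) * k t x y = (1 + ‖x‖ ^ α) * k t y x)
    (hCK : ∀ t > (0 : ℝ), ∀ s > (0 : ℝ), ∀ x y,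
      (1 + ‖y‖ ^ α) * k (t + s) x y =
        ∫ z, ((1 + ‖z‖ ^ α) * k t x z) * ((1 + ‖y‖ ^ α) * k s z y) ∂(muMeas N α))
    (hL2 : ∀ t > (0 : ℝ), ∀ x,
      MemLp (fun y => (1 + ‖y‖ ^ α) * k t x y) 2 (muMeas N α))
    (heig : ∀ t > (0 : ℝ), ∀ x, ∫ y, k t x y * ψ y = Real.exp (lam0 * t) * ψ x) :
    ∃ M > 0, ∀ t > (0 : ℝ), ∀ x : EuclideanSpace ℝ (Fin N), 1 ≤ ‖x‖ →
      M * Real.exp (lam0 * t) *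
          (‖x‖ ^ ((α - β) / 4 - ((N : ℝ) - 1) / 2) *
            Real.exp (-(2 / (β - α + 2)) * ‖x‖ ^ ((β - α + 2) / 2))) ^ 2 *
          (1 + ‖x‖ ^ α)⁻¹ ≤ k t x x := by
  set S := ∫ y, ψ y ^ 2 ∂(muMeas N α)
  have hS : 0 ≤ S := integral_nonneg fun y => sq_nonneg _
  -- `S + 1` rather than `S`, so that no argument for `S ≠ 0` is needed
  refine ⟨C₁ ^ 2 / (S + 1), by positivity, fun t ht x hx => ?_⟩
  set kμ : ℝ → _ → _ → ℝ := fun t x y => (1 + ‖y‖ ^ α) * k t x y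
  have hs : t / 2 > 0 := half_pos ht
  have hsymm_s : ∀ z, kμ (t / 2) z x = kμ (t / 2) x z := fun z => hsymm _ hs z x
  have heig_s :
      ∫ z, kμ (t / 2) x z * ψ z ∂(muMeas N α) = Real.exp (lam0 * (t / 2)) * ψ x := by
    simp only [kμ, mul_assoc, integral_weight_mul_muMeas, heig _ hs]
  have hbound := exp_mul_sq_le_diag_mul_integral_sq hsymm_s (hCK _ hs _ hs x x) (hL2 _ hs x)
    hψL2 heig_s
  have hdiag := diag_nonneg_of_chapmanKolmogorov hsymm_s (hCK _ hs _ hs x x)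
  simp only [kμ, add_halves] at hbound hdiag
  set E := ‖x‖ ^ ((α - β) / 4 - ((N : ℝ) - 1) / 2) *
    Real.exp (-(2 / (β - α + 2)) * ‖x‖ ^ ((β - α + 2) / 2))
  have hψx : C₁ * E ≤ ψ x := by
    rw [← mul_assoc,
      show (α - β) / 4 - ((N : ℝ) - 1) / 2 = -(((N : ℝ) - 1) / 2) - (β - α) / 4 by ring]
    exact hψlow x hx
  have hw : 0 < 1 + ‖x‖ ^ α := by positivity
  calc C₁ ^ 2 / (S + 1) * Real.exp (lam0 * t) * E ^ 2 * (1 + ‖x‖ ^ α)⁻¹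
      = Real.exp (lam0 * t) * (C₁ * E) ^ 2 / ((S + 1) * (1 + ‖x‖ ^ α)) := by field_simp
    _ ≤ (1 + ‖x‖ ^ α) * k t x x * (S + 1) / ((S + 1) * (1 + ‖x‖ ^ α)) := by
      gcongr ?_ / _
      calc Real.exp (lam0 * t) * (C₁ * E) ^ 2 ≤ Real.exp (lam0 * t) * ψ x ^ 2 := by gcongr
        _ ≤ (1 + ‖x‖ ^ α) * k t x x * S := hbound
        _ ≤ (1 + ‖x‖ ^ α) * k t x x * (S + 1) := by gcongr; linarith
    _ = k t x x := by field_simp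

/-- On-diagonal heat kernel lower bound (Proposition 3.2):
`k(t,x,x) ≥ M e^{λ₀ t} (|x|^{(α-β)/4-(N-1)/2} e^{-(2/(β-α+2))|x|^{(β-α+2)/2}})² (1+|x|^α)^{-1}`
for `t > 0` and `|x| ≥ 1`. -/
theorem on_diagonal_heat_kernel_lower_bound
    (N : ℕ) (hN : 2 < N) (α β lam0 : ℝ) (hα : 2 ≤ α) (hβ : α - 2 < β) (hlam0 : lam0 < 0)
    (ψ : EuclideanSpace ℝ (Fin N) → ℝ) (hψcont : Continuous ψ) (hψpos : ∀ x, 0 < ψ x)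
    (hψbdd : ∃ M : ℝ, ∀ x, ψ x ≤ M)
    (hψL2 : MemLp ψ 2 (muMeas N α))
    (C₁ : ℝ) (hC₁ : 0 < C₁)
    (hψlow : ∀ x : EuclideanSpace ℝ (Fin N), 1 ≤ ‖x‖ →
      C₁ * ‖x‖ ^ (-(((N : ℝ) - 1) / 2) - (β - α) / 4) *
        Real.exp (-(2 / (β - α + 2)) * ‖x‖ ^ ((β - α + 2) / 2)) ≤ ψ x)
    (k : ℝ → EuclideanSpace ℝ (Fin N) → EuclideanSpace ℝ (Fin N) → ℝ)
    (hmeas : Measurable fun p : ℝ × EuclideanSpace ℝ (Fin N) × EuclideanSpace ℝ (Fin N) =>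
      k p.1 p.2.1 p.2.2)
    (hnonneg : ∀ t > (0 : ℝ), ∀ x y, 0 ≤ k t x y)
    (hsymm : ∀ t > (0 : ℝ), ∀ x y,
      (1 + ‖y‖ ^ α) * k t x y = (1 + ‖x‖ ^ α) * k t y x)
    (hCK : ∀ t > (0 : ℝ), ∀ s > (0 : ℝ), ∀ x y,
      (1 + ‖y‖ ^ α) * k (t + s) x y =
        ∫ z, ((1 + ‖z‖ ^ α) * k t x z) * ((1 + ‖y‖ ^ α) * k s z y) ∂(muMeas N α))
    (hL2 : ∀ t > (0 : ℝ), ∀ x,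
      MemLp (fun y => (1 + ‖y‖ ^ α) * k t x y) 2 (muMeas N α))
    (heig : ∀ t > (0 : ℝ), ∀ x, ∫ y, k t x y * ψ y = Real.exp (lam0 * t) * ψ x) :
    ∃ M > 0, ∀ t > (0 : ℝ), ∀ x : EuclideanSpace ℝ (Fin N), 1 ≤ ‖x‖ →
      M * Real.exp (lam0 * t) *
          (‖x‖ ^ ((α - β) / 4 - ((N : ℝ) - 1) / 2) *
            Real.exp (-(2 / (β - α + 2)) * ‖x‖ ^ ((β - α + 2) / 2))) ^ 2 *
          (1 + ‖x‖ ^ α)⁻¹ ≤ k t x x :=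
  on_diagonal_heat_kernel_lower_bound_general N α β lam0 ψ hψL2 C₁ hC₁ hψlow k hsymm hCK hL2 heig
end

section
/- Heat kernel upper bound (Theorem 3.3, given short-time intrinsic ultracontractivity): Let N > 2, α ≥ 2, β > α − 2, λ₀ < 0, set b := (β−α+2)/(β+α−2), and let μ be the measure on ℝ^N with dμ(x) = (1+|x|^α)^{−1} dx. Let ψ : ℝ^N → (0,∞) satisfy ψ(x) ≤ C₂ |x|^{−(N−1)/2 − (β−α)/4} exp(−(2/(β−α+2)) |x|^{(β−α+2)/2}) for |x| ≥ 1, for some C₂ > 0. Let k : (0,∞) × ℝ^N × ℝ^N → [0,∞) be measurable and define k_μ(t,x,y) := (1+|y|^α) k(t,x,y); assume: (i) k_μ is symmetric in (x,y); (ii) k_μ satisfies the Chapman–Kolmogorov identity k_μ(t+s,x,y) = ∫ k_μ(t,x,z) k_μ(s,z,y) dμ(z); (iii) k_μ(t,x,·) ∈ L²(μ) for all t > 0 and x; (iv) for every f ∈ L²(μ) and s > 0, ‖∫ k_μ(s,·,y) f(y) dμ(y)‖_{L²(μ)} ≤ e^{λ₀ s}‖f‖_{L²(μ)}; (v) there are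 constants a₁, a₂ > 0 with k_μ(t,x,y) ≤ a₁ e^{a₂ t^{−b}} ψ(x) ψ(y) for all 0 < t ≤ 1 and x, y ∈ ℝ^N. Then there exist constants c₁, c₂ > 0 such that for all t > 0 and all x, y ∈ ℝ^N with |x| ≥ 1 and |y| ≥ 1: k(t,x,y) ≤ c₁ e^{λ₀ t + c₂ t^{−b}} |x|^{−(N−1)/2 − (β−α)/4} exp(−(2/(β−α+2)) |x|^{(β−α+2)/2}) · (1+|y|^α)^{−1} |y|^{−(N−1)/2 − (β−α)/4} exp(−(2/(β−α+2)) |y|^{(β−α+2)/2}). -/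
/-! Write `K = k_μ`. Chapman–Kolmogorov and symmetry give `K(2τ, x, x) = ‖K(τ, x, ·)‖²` in
`L²(μ)`, and for `t = τ + s + τ` Cauchy–Schwarz together with the contraction `‖T_s‖ ≤ e^{λ₀ s}`
give `K(t, x, y) ≤ e^{λ₀ s} √(K(2τ, x, x) K(2τ, y, y))`. Taking `τ = 1/2`, the diagonal at time `1`
is controlled by the short-time estimate, so `K(t, x, y) ≲ e^{λ₀ t} ψ(x) ψ(y)` for `t > 1`; for
`t ≤ 1` the short-time estimate applies directly. The decay of `ψ` and the density
`(1+|y|^α)^{-1}` relating `k` to `k_μ` finish the proof. -/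

open MeasureTheory Filter Real

section SymmetricMarkovKernel

variable {X : Type*}

def IsSymmetricKernel (K : ℝ → X → X → ℝ) : Prop :=
  ∀ t > (0 : ℝ), ∀ x y, K t x y = K t y x

variable [MeasurableSpace X]

def ChapmanKolmogorov (μ : Measure X) (K : ℝ → X → X → ℝ) : Prop :=
  ∀ t > (0 : ℝ), ∀ s > (0 : ℝ), ∀ x y, K (t + s) x y = ∫ z, K t x z * K s z y ∂μ

def IsL2Contraction (μ : Measure X) (K : ℝ → X → X → ℝ) (lam : ℝ) : Prop :=
  ∀ f : X → ℝ, MemLp f 2 μ → ∀ s > (0 : ℝ),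
    ∫ x, (∫ y, K s x y * f y ∂μ) ^ 2 ∂μ ≤ exp (lam * s) ^ 2 * ∫ x, f x ^ 2 ∂μ

variable {μ : Measure X} {K : ℝ → X → X → ℝ}

theorem integral_sq_kernel_eq_diag (hsymm : IsSymmetricKernel K) (hCK : ChapmanKolmogorov μ K)
    {t : ℝ} (ht : 0 < t) (x : X) :
    ∫ z, K t x z ^ 2 ∂μ = K (t + t) x x := by
  rw [hCK t ht t ht]
  simp only [hsymm t ht _ x, sq]

theorem integral_sq_kernel_add_le (hsymm : IsSymmetricKernel K) (hCK : ChapmanKolmogorov μ K)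
    (hL2 : ∀ t > (0 : ℝ), ∀ x, MemLp (K t x) 2 μ) {lam : ℝ} (hcontr : IsL2Contraction μ K lam)
    {s τ : ℝ} (hs : 0 < s) (hτ : 0 < τ) (x : X) :
    ∫ z, K (s + τ) x z ^ 2 ∂μ ≤ exp (lam * s) ^ 2 * ∫ z, K τ x z ^ 2 ∂μ := by
  have hsemigroup : ∀ z, K (s + τ) x z = ∫ w, K s z w * K τ x w ∂μ := fun z => by
    rw [hsymm _ (add_pos hs hτ), hCK s hs τ hτ]
    simp only [hsymm τ hτ _ x]
  simp only [hsemigroup]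
  exact hcontr _ (hL2 τ hτ x) s hs

theorem kernel_le_exp_mul_sqrt_diag (hsymm : IsSymmetricKernel K) (hCK : ChapmanKolmogorov μ K)
    (hL2 : ∀ t > (0 : ℝ), ∀ x, MemLp (K t x) 2 μ) (hnonneg : ∀ t > (0 : ℝ), ∀ x y, 0 ≤ K t x y)
    {lam : ℝ} (hcontr : IsL2Contraction μ K lam)
    {s τ : ℝ} (hs : 0 < s) (hτ : 0 < τ) (x y : X) :
    K (τ + (s + τ)) x y ≤ exp (lam * s) * √(K (τ + τ) x x * K (τ + τ) y y) := by
  have hsτ : 0 < s + τ := add_pos hs hτ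
  have hCS := integral_mul_le_Lp_mul_Lq_of_nonneg (μ := μ) Real.HolderConjugate.two_two
    (Eventually.of_forall (hnonneg τ hτ x)) (Eventually.of_forall (hnonneg _ hsτ y))
    (by simpa using hL2 τ hτ x) (by simpa using hL2 _ hsτ y)
  simp only [Real.rpow_two, ← Real.sqrt_eq_rpow] at hCS
  calc K (τ + (s + τ)) x y = ∫ z, K τ x z * K (s + τ) y z ∂μ := by
        rw [hCK τ hτ _ hsτ]; simp only [hsymm _ hsτ _ y]
    _ ≤ √(∫ z, K τ x z ^ 2 ∂μ) * √(∫ z, K (s + τ) y z ^ 2 ∂μ) := hCS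
    _ ≤ √(K (τ + τ) x x) * √(exp (lam * s) ^ 2 * K (τ + τ) y y) := by
        rw [← integral_sq_kernel_eq_diag hsymm hCK hτ, ← integral_sq_kernel_eq_diag hsymm hCK hτ]
        gcongr
        exact integral_sq_kernel_add_le hsymm hCK hL2 hcontr hs hτ y
    _ = exp (lam * s) * √(K (τ + τ) x x * K (τ + τ) y y) := by
        rw [Real.sqrt_mul (sq_nonneg (exp (lam * s))), Real.sqrt_sq (exp_pos _).le,
          Real.sqrt_mul' _ (hnonneg _ (add_pos hτ hτ) y y)]
        ring

theorem kernel_le_exp_mul_of_diag_le (hsymm : IsSymmetricKernel K) (hCK : ChapmanKolmogorov μ K)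
    (hL2 : ∀ t > (0 : ℝ), ∀ x, MemLp (K t x) 2 μ) (hnonneg : ∀ t > (0 : ℝ), ∀ x y, 0 ≤ K t x y)
    {lam : ℝ} (hcontr : IsL2Contraction μ K lam)
    {ψ : X → ℝ} (hψ : ∀ x, 0 ≤ ψ x) {c : ℝ} (hc : 0 ≤ c)
    (hdiag : ∀ x, K 1 x x ≤ c * ψ x * ψ x) {t : ℝ} (ht : 1 < t) (x y : X) :
    K t x y ≤ exp (lam * (t - 1)) * (c * ψ x * ψ y) := by
  have hψx := hψ x
  have hψy := hψ y
  have hdiag_mul : K 1 x x * K 1 y y ≤ (c * ψ x * ψ y) ^ 2 :=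
    calc K 1 x x * K 1 y y ≤ (c * ψ x * ψ x) * (c * ψ y * ψ y) :=
          mul_le_mul (hdiag x) (hdiag y) (hnonneg 1 one_pos y y) (by positivity)
      _ = (c * ψ x * ψ y) ^ 2 := by ring
  calc K t x y = K (1 / 2 + ((t - 1) + 1 / 2)) x y := by ring_nf
    _ ≤ exp (lam * (t - 1)) * √(K 1 x x * K 1 y y) := by
        convert kernel_le_exp_mul_sqrt_diag hsymm hCK hL2 hnonneg hcontr (sub_pos.2 ht)
          one_half_pos x y using 4 <;> norm_num
    _ ≤ exp (lam * (t - 1)) * (c * ψ x * ψ y) := by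
        gcongr
        exact Real.sqrt_le_iff.2 ⟨by positivity, hdiag_mul⟩

theorem kernel_le_of_short_time_bound (hsymm : IsSymmetricKernel K) (hCK : ChapmanKolmogorov μ K)
    (hL2 : ∀ t > (0 : ℝ), ∀ x, MemLp (K t x) 2 μ) (hnonneg : ∀ t > (0 : ℝ), ∀ x y, 0 ≤ K t x y)
    {lam : ℝ} (hlam : lam ≤ 0) (hcontr : IsL2Contraction μ K lam)
    {ψ : X → ℝ} (hψ : ∀ x, 0 ≤ ψ x) {a₁ a₂ p : ℝ} (ha₁ : 0 ≤ a₁) (ha₂ : 0 ≤ a₂)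
    (hshort : ∀ t : ℝ, 0 < t → t ≤ 1 → ∀ x y, K t x y ≤ a₁ * exp (a₂ * t ^ p) * ψ x * ψ y)
    {t : ℝ} (ht : 0 < t) (x y : X) :
    K t x y ≤ a₁ * exp (a₂ - lam) * exp (lam * t + a₂ * t ^ p) * ψ x * ψ y := by
  have hψx := hψ x
  have hψy := hψ y
  have htp : 0 ≤ t ^ p := Real.rpow_nonneg ht.le p
  rw [mul_assoc a₁, ← exp_add]
  rcases le_or_gt t 1 with ht1 | ht1
  · calc K t x y ≤ a₁ * exp (a₂ * t ^ p) * ψ x * ψ y := hshort t ht ht1 x y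
      _ ≤ a₁ * exp (a₂ - lam + (lam * t + a₂ * t ^ p)) * ψ x * ψ y := by
          gcongr a₁ * exp ?_ * _ * _
          nlinarith
  · have hdiag : ∀ x, K 1 x x ≤ a₁ * exp a₂ * ψ x * ψ x := fun x => by
      simpa using hshort 1 one_pos le_rfl x x
    calc K t x y ≤ exp (lam * (t - 1)) * (a₁ * exp a₂ * ψ x * ψ y) :=
          kernel_le_exp_mul_of_diag_le hsymm hCK hL2 hnonneg hcontr hψ (by positivity) hdiag
            ht1 x y
      _ = a₁ * exp (lam * (t - 1) + a₂) * ψ x * ψ y := by rw [exp_add]; ring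
      _ ≤ a₁ * exp (a₂ - lam + (lam * t + a₂ * t ^ p)) * ψ x * ψ y := by
          gcongr a₁ * exp ?_ * _ * _
          nlinarith

end SymmetricMarkovKernel

theorem heat_kernel_upper_bound_general
    (N : ℕ) (α β lam0 C₂ : ℝ)
    (hlam0 : lam0 < 0) (hC₂ : 0 < C₂)
    (ψ : EuclideanSpace ℝ (Fin N) → ℝ) (hψpos : ∀ x, 0 < ψ x)
    (hψup : ∀ x : EuclideanSpace ℝ (Fin N), 1 ≤ ‖x‖ →
      ψ x ≤ C₂ * ‖x‖ ^ (-(((N : ℝ) - 1) / 2) - (β - α) / 4) *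
        Real.exp (-(2 / (β - α + 2)) * ‖x‖ ^ ((β - α + 2) / 2)))
    (k : ℝ → EuclideanSpace ℝ (Fin N) → EuclideanSpace ℝ (Fin N) → ℝ)
    (hnonneg : ∀ t > (0 : ℝ), ∀ x y, 0 ≤ k t x y)
    (hsymm : ∀ t > (0 : ℝ), ∀ x y,
      (1 + ‖y‖ ^ α) * k t x y = (1 + ‖x‖ ^ α) * k t y x)
    (hCK : ∀ t > (0 : ℝ), ∀ s > (0 : ℝ), ∀ x y,
      (1 + ‖y‖ ^ α) * k (t + s) x y =
        ∫ z, ((1 + ‖z‖ ^ α) * k t x z) * ((1 + ‖y‖ ^ α) * k s z y) ∂(muMeas N α))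
    (hL2 : ∀ t > (0 : ℝ), ∀ x,
      MemLp (fun y => (1 + ‖y‖ ^ α) * k t x y) 2 (muMeas N α))
    (hopnorm : ∀ f : EuclideanSpace ℝ (Fin N) → ℝ, MemLp f 2 (muMeas N α) →
      ∀ s > (0 : ℝ),
      ∫ x, (∫ y, ((1 + ‖y‖ ^ α) * k s x y) * f y ∂(muMeas N α)) ^ 2 ∂(muMeas N α) ≤
        Real.exp (lam0 * s) ^ 2 * ∫ x, f x ^ 2 ∂(muMeas N α))
    (a₁ a₂ : ℝ) (ha₁ : 0 < a₁) (ha₂ : 0 < a₂)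
    (hIU : ∀ t : ℝ, 0 < t → t ≤ 1 → ∀ x y,
      (1 + ‖y‖ ^ α) * k t x y ≤
        a₁ * Real.exp (a₂ * t ^ (-((β - α + 2) / (β + α - 2)))) * ψ x * ψ y) :
    ∃ c₁ > 0, ∃ c₂ > 0, ∀ t > (0 : ℝ), ∀ x y : EuclideanSpace ℝ (Fin N),
      1 ≤ ‖x‖ → 1 ≤ ‖y‖ →
      k t x y ≤
        c₁ * Real.exp (lam0 * t + c₂ * t ^ (-((β - α + 2) / (β + α - 2)))) *
          (‖x‖ ^ (-(((N : ℝ) - 1) / 2) - (β - α) / 4) *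
            Real.exp (-(2 / (β - α + 2)) * ‖x‖ ^ ((β - α + 2) / 2))) *
          ((1 + ‖y‖ ^ α)⁻¹ * ‖y‖ ^ (-(((N : ℝ) - 1) / 2) - (β - α) / 4) *
            Real.exp (-(2 / (β - α + 2)) * ‖y‖ ^ ((β - α + 2) / 2))) := by
  have hweight : ∀ y : EuclideanSpace ℝ (Fin N), 0 < 1 + ‖y‖ ^ α := fun y => by positivity
  refine ⟨a₁ * exp (a₂ - lam0) * (C₂ * C₂), by positivity, a₂, ha₂, fun t ht x y hx hy => ?_⟩
  have hkμ := kernel_le_of_short_time_bound (K := fun t x y => (1 + ‖y‖ ^ α) * k t x y)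
    hsymm hCK hL2 (fun t ht x y => mul_nonneg (hweight y).le (hnonneg t ht x y)) hlam0.le
    hopnorm (fun x => (hψpos x).le) ha₁.le ha₂.le hIU ht x y
  have hψx := hψup x hx
  have hψy := hψup y hy
  calc k t x y = (1 + ‖y‖ ^ α)⁻¹ * ((1 + ‖y‖ ^ α) * k t x y) := by
        rw [inv_mul_cancel_left₀ (hweight y).ne']
    _ ≤ (1 + ‖y‖ ^ α)⁻¹ * (a₁ * exp (a₂ - lam0) *
          exp (lam0 * t + a₂ * t ^ (-((β - α + 2) / (β + α - 2)))) * ψ x * ψ y) := by gcongr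
    _ ≤ (1 + ‖y‖ ^ α)⁻¹ * (a₁ * exp (a₂ - lam0) *
          exp (lam0 * t + a₂ * t ^ (-((β - α + 2) / (β + α - 2)))) *
          (C₂ * ‖x‖ ^ (-(((N : ℝ) - 1) / 2) - (β - α) / 4) *
            exp (-(2 / (β - α + 2)) * ‖x‖ ^ ((β - α + 2) / 2))) *
          (C₂ * ‖y‖ ^ (-(((N : ℝ) - 1) / 2) - (β - α) / 4) *
            exp (-(2 / (β - α + 2)) * ‖y‖ ^ ((β - α + 2) / 2)))) := by
        have hψy_nonneg := (hψpos y).le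
        gcongr
    _ = _ := by ring

/-- Heat kernel upper bound (Theorem 3.3), given the short-time intrinsic
ultracontractivity `k_μ(t,x,y) ≤ a₁ e^{a₂ t^{-b}} ψ(x) ψ(y)` for `0 < t ≤ 1`:
for all `t > 0` and `|x|, |y| ≥ 1`,
`k(t,x,y) ≤ c₁ e^{λ₀ t + c₂ t^{-b}} Φ(x) (1+|y|^α)^{-1} Φ(y)`. -/
theorem heat_kernel_upper_bound
    (N : ℕ) (hN : 2 < N) (α β lam0 C₂ : ℝ) (hα : 2 ≤ α) (hβ : α - 2 < β)
    (hlam0 : lam0 < 0) (hC₂ : 0 < C₂)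
    (ψ : EuclideanSpace ℝ (Fin N) → ℝ) (hψpos : ∀ x, 0 < ψ x)
    (hψup : ∀ x : EuclideanSpace ℝ (Fin N), 1 ≤ ‖x‖ →
      ψ x ≤ C₂ * ‖x‖ ^ (-(((N : ℝ) - 1) / 2) - (β - α) / 4) *
        Real.exp (-(2 / (β - α + 2)) * ‖x‖ ^ ((β - α + 2) / 2)))
    (k : ℝ → EuclideanSpace ℝ (Fin N) → EuclideanSpace ℝ (Fin N) → ℝ)
    (hmeas : Measurable fun p : ℝ × EuclideanSpace ℝ (Fin N) × EuclideanSpace ℝ (Fin N) =>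
      k p.1 p.2.1 p.2.2)
    (hnonneg : ∀ t > (0 : ℝ), ∀ x y, 0 ≤ k t x y)
    (hsymm : ∀ t > (0 : ℝ), ∀ x y,
      (1 + ‖y‖ ^ α) * k t x y = (1 + ‖x‖ ^ α) * k t y x)
    (hCK : ∀ t > (0 : ℝ), ∀ s > (0 : ℝ), ∀ x y,
      (1 + ‖y‖ ^ α) * k (t + s) x y =
        ∫ z, ((1 + ‖z‖ ^ α) * k t x z) * ((1 + ‖y‖ ^ α) * k s z y) ∂(muMeas N α))
    (hL2 : ∀ t > (0 : ℝ), ∀ x,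
      MemLp (fun y => (1 + ‖y‖ ^ α) * k t x y) 2 (muMeas N α))
    (hopnorm : ∀ f : EuclideanSpace ℝ (Fin N) → ℝ, MemLp f 2 (muMeas N α) →
      ∀ s > (0 : ℝ),
      ∫ x, (∫ y, ((1 + ‖y‖ ^ α) * k s x y) * f y ∂(muMeas N α)) ^ 2 ∂(muMeas N α) ≤
        Real.exp (lam0 * s) ^ 2 * ∫ x, f x ^ 2 ∂(muMeas N α))
    (a₁ a₂ : ℝ) (ha₁ : 0 < a₁) (ha₂ : 0 < a₂)
    (hIU : ∀ t : ℝ, 0 < t → t ≤ 1 → ∀ x y,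
      (1 + ‖y‖ ^ α) * k t x y ≤
        a₁ * Real.exp (a₂ * t ^ (-((β - α + 2) / (β + α - 2)))) * ψ x * ψ y) :
    ∃ c₁ > 0, ∃ c₂ > 0, ∀ t > (0 : ℝ), ∀ x y : EuclideanSpace ℝ (Fin N),
      1 ≤ ‖x‖ → 1 ≤ ‖y‖ →
      k t x y ≤
        c₁ * Real.exp (lam0 * t + c₂ * t ^ (-((β - α + 2) / (β + α - 2)))) *
          (‖x‖ ^ (-(((N : ℝ) - 1) / 2) - (β - α) / 4) *
            Real.exp (-(2 / (β - α + 2)) * ‖x‖ ^ ((β - α + 2) / 2))) *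
          ((1 + ‖y‖ ^ α)⁻¹ * ‖y‖ ^ (-(((N : ℝ) - 1) / 2) - (β - α) / 4) *
            Real.exp (-(2 / (β - α + 2)) * ‖y‖ ^ ((β - α + 2) / 2))) :=
  heat_kernel_upper_bound_general N α β lam0 C₂ hlam0 hC₂ ψ hψpos hψup k hnonneg hsymm hCK hL2
    hopnorm a₁ a₂ ha₁ ha₂ hIU
end
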